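/- If p ∈ (0,2) and ‖t(v)‖_{ℓw_p} < ∞, then v ∈ A^s_t with s = 1/p − 1/2, and ‖v‖_{A^s_t} ≤ C ‖t(v)‖_{ℓw_p}, where C > 0 depends only on p, the number of roots, and an upper bound on the number of children per node. -/

import Mathlib

/-!
Let `t = t(v)` and `M = ‖t‖_{ℓw_p}`. Since `t` increases towards the roots, the roots together
with `{t ≥ ε}` form a tree `T`, and the weak-`ℓ_p` bound gives `#{t ≥ ε} ≤ M^p ε^{-p}`.
Every node outside `T` lies below a node of the outer boundary of `T`, so the squared error of
restricting `v` to `T` is at most `∑ t_μ²` over boundary nodes `μ`, where `t_μ < ε`.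
Grouping these values into dyadic levels `(ε 2^{-k-1}, ε 2^{-k}]` and counting each level with
the weak-`ℓ_p` bound gives a geometric series (as `p < 2`) summing to `≲ M^p ε^{2-p}`.
Choosing `ε^p ≍ M^p / N` yields the rate `N^{-(1/p - 1/2)}`.
-/

open scoped ENNReal

/-- A subset `T` of a forest (with parent map `parent`, roots = nodes with no parent)
is a tree if it contains all roots and the parent of each of its non-root elements. -/
def IsTree {S : Type*} (parent : S → Option S) (T : Set S) : Prop :=
  (∀ δ : S, parent δ = none → δ ∈ T) ∧
    ∀ δ ∈ T, ∀ δ' : S, parent δ = some δ' → δ' ∈ T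

/-- `t_λ(v) = (Σ_{λ'⪯λ} |v_{λ'}|²)^{1/2}`, where `λ' ⪯ λ` means that `λ` is reached
from `λ'` by iterating the parent map (or `λ' = λ`). -/
noncomputable def tcal {S : Type*} (parent : S → Option S) (v : S → ℝ) (lam : S) :
    ℝ :=
  Real.sqrt (∑' lam' :
    {x : S // Relation.ReflTransGen (fun a b : S => parent a = some b) x lam},
    v lam'.1 ^ 2)

/-- `w*_k`, the `k`-th largest of the values `|w_λ|` (the decreasing rearrangement):
the infimum over all sets `F` of `k−1` indices of the supremum of `|w|` outside `F`. -/
noncomputable def decRear {S : Type*} (w : S → ℝ) (k : ℕ) : ℝ≥0∞ :=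
  ⨅ (F : Finset S) (_ : F.card + 1 = k), ⨆ x : {x : S // x ∉ F}, ENNReal.ofReal |w x.1|

/-- The weak-`ℓ_p` quasi-norm `‖w‖_{ℓw_p} = sup_{k≥1} k^{1/p}·w*_k`. -/
noncomputable def wlp {S : Type*} (p : ℝ) (w : S → ℝ) : ℝ≥0∞ :=
  ⨆ k : ℕ, ((k : ℝ≥0∞) + 1) ^ (1 / p) * decRear w (k + 1)

/-- The error `inf{‖v − w‖ : supp w ⊆ T for some finite tree T ⊆ S with #T ≤ N}` of
best `N`-term tree approximation in `ℓ²(S)`. -/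
noncomputable def treeSigma {S : Type*} (parent : S → Option S) (N : ℕ)
    (v : lp (fun _ : S => ℝ) 2) : ℝ :=
  sInf {x : ℝ | ∃ (T : Finset S) (w : lp (fun _ : S => ℝ) 2),
    IsTree parent ↑T ∧ T.card ≤ N ∧ (∀ lam : S, lam ∉ T → w lam = 0) ∧ x = ‖v - w‖}

section WeakLp

variable {S : Type*} {p : ℝ} (w : S → ℝ)

theorem ofReal_le_decRear_card {δ : ℝ} (s : Finset S) (hs : ∀ x ∈ s, δ ≤ |w x|) :
    ENNReal.ofReal δ ≤ decRear w s.card := by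
  refine le_iInf₂ fun F hF => ?_
  obtain ⟨x, hxs, hxF⟩ : ∃ x ∈ s, x ∉ F := by
    by_contra! h
    have := Finset.card_le_card h
    omega
  exact (ENNReal.ofReal_le_ofReal (hs x hxs)).trans
    (le_iSup (fun y : {y // y ∉ F} => ENNReal.ofReal |w y.1|) ⟨x, hxF⟩)

theorem card_rpow_mul_ofReal_le_wlp (hp : 0 < p) {δ : ℝ} (s : Finset S)
    (hs : ∀ x ∈ s, δ ≤ |w x|) : (s.card : ℝ≥0∞) ^ (1 / p) * ENNReal.ofReal δ ≤ wlp p w := by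
  have hδ := ofReal_le_decRear_card w s hs
  cases h : s.card with
  | zero =>
    rw [Nat.cast_zero, ENNReal.zero_rpow_of_pos (one_div_pos.2 hp), zero_mul]
    exact zero_le
  | succ k =>
    rw [h] at hδ
    calc ((k + 1 : ℕ) : ℝ≥0∞) ^ (1 / p) * ENNReal.ofReal δ
        ≤ ((k : ℝ≥0∞) + 1) ^ (1 / p) * decRear w (k + 1) := by push_cast; gcongr
      _ ≤ wlp p w := le_iSup (fun k : ℕ => ((k : ℝ≥0∞) + 1) ^ (1 / p) * decRear w (k + 1)) k

theorem card_mul_rpow_le_wlp_toReal_rpow (hp : 0 < p) (hw : wlp p w ≠ ⊤) {δ : ℝ} (hδ : 0 ≤ δ)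
    (s : Finset S) (hs : ∀ x ∈ s, δ ≤ |w x|) : s.card * δ ^ p ≤ (wlp p w).toReal ^ p := by
  have h := ENNReal.toReal_mono hw (card_rpow_mul_ofReal_le_wlp w hp s hs)
  rw [ENNReal.toReal_mul, ← ENNReal.toReal_rpow, ENNReal.toReal_natCast,
    ENNReal.toReal_ofReal hδ] at h
  calc (s.card : ℝ) * δ ^ p = ((s.card : ℝ) ^ (1 / p) * δ) ^ p := by
        rw [Real.mul_rpow (by positivity) hδ, ← Real.rpow_mul (by positivity),
          one_div_mul_cancel hp.ne', Real.rpow_one]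
    _ ≤ (wlp p w).toReal ^ p := by gcongr

theorem finite_setOf_le_abs_of_wlp_ne_top (hp : 0 < p) (hw : wlp p w ≠ ⊤) {δ : ℝ}
    (hδ : 0 < δ) : {x | δ ≤ |w x|}.Finite := by
  by_contra hinf
  obtain ⟨n, hn⟩ := exists_nat_gt ((wlp p w).toReal ^ p / δ ^ p)
  obtain ⟨s, hsub, rfl⟩ := Set.Infinite.exists_subset_card_eq hinf n
  have := card_mul_rpow_le_wlp_toReal_rpow w hp hw hδ.le s hsub
  rw [div_lt_iff₀ (by positivity)] at hn
  linarith

end WeakLp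

theorem exists_mem_Icc_div_two_pow {x ε : ℝ} (hx : 0 < x) (hxε : x ≤ ε) :
    ∃ k : ℕ, x ∈ Set.Icc (ε / 2 ^ (k + 1)) (2 * (ε / 2 ^ (k + 1))) := by
  obtain ⟨k, hk1, hk2⟩ := exists_nat_pow_near ((one_le_div hx).2 hxε) one_lt_two
  rw [le_div_iff₀ hx] at hk1
  rw [div_lt_iff₀ hx] at hk2
  have h2k : 2 * (ε / 2 ^ (k + 1)) = ε / 2 ^ k := by
    rw [pow_succ]
    field_simp
  refine ⟨k, ?_, ?_⟩
  · rw [div_le_iff₀ (by positivity)]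
    linarith
  · rw [h2k, le_div_iff₀ (by positivity)]
    linarith

theorem sum_pow_succ_le_div_one_sub {r : ℝ} (hr0 : 0 ≤ r) (hr1 : r < 1) (I : Finset ℕ) :
    ∑ j ∈ I, r ^ (j + 1) ≤ r / (1 - r) := by
  calc ∑ j ∈ I, r ^ (j + 1) = ∑ j ∈ I, r * r ^ j := by simp only [pow_succ']
    _ ≤ ∑' j, r * r ^ j :=
        ((summable_geometric_of_lt_one hr0 hr1).mul_left r).sum_le_tsum _ fun _ _ => by positivity
    _ = r / (1 - r) := by rw [tsum_mul_left, tsum_geometric_of_lt_one hr0 hr1, div_eq_mul_inv]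

noncomputable def dyadicTailConst (p : ℝ) : ℝ := 4 * (2 ^ (p - 2) / (1 - 2 ^ (p - 2)))

theorem dyadicTailConst_pos {p : ℝ} (hp : p < 2) : 0 < dyadicTailConst p :=
  mul_pos four_pos <| div_pos (by positivity) <|
    sub_pos.2 (Real.rpow_lt_one_of_one_lt_of_neg one_lt_two (by linarith))

section TailSum

variable {ι : Type*} {p A : ℝ} (t : ι → ℝ)

theorem sum_sq_le_of_mem_Icc {δ : ℝ} (hδ : 0 < δ) (s : Finset ι)
    (hs : ∀ μ ∈ s, t μ ∈ Set.Icc δ (2 * δ)) (hcard : s.card * δ ^ p ≤ A) :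
    ∑ μ ∈ s, t μ ^ 2 ≤ 4 * A * δ ^ (2 - p) := by
  calc ∑ μ ∈ s, t μ ^ 2 ≤ ∑ _μ ∈ s, (2 * δ) ^ 2 := by
        refine Finset.sum_le_sum fun μ hμ => ?_
        obtain ⟨h1, h2⟩ := hs μ hμ
        exact pow_le_pow_left₀ (by linarith) h2 2
    _ = 4 * (s.card * δ ^ p) * δ ^ (2 - p) := by
        have hδ2 : δ ^ 2 = δ ^ p * δ ^ (2 - p) := by
          rw [← Real.rpow_add hδ, add_sub_cancel, Real.rpow_two]
        rw [Finset.sum_const, nsmul_eq_mul, mul_pow, hδ2]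
        ring
    _ ≤ 4 * A * δ ^ (2 - p) := by gcongr

theorem sum_sq_le_of_card_mul_rpow_le (hp : p < 2) {ε : ℝ} (hε : 0 < ε) (Γ : Finset ι)
    (hΓ : ∀ μ ∈ Γ, t μ ∈ Set.Icc 0 ε)
    (hA : ∀ δ > 0, ∀ s : Finset ι, (∀ μ ∈ s, δ ≤ t μ) → s.card * δ ^ p ≤ A) :
    ∑ μ ∈ Γ, t μ ^ 2 ≤ dyadicTailConst p * A * ε ^ (2 - p) := by
  classical
  set r : ℝ := 2 ^ (p - 2) with hr
  have hr0 : 0 ≤ r := by positivity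
  have hr1 : r < 1 := Real.rpow_lt_one_of_one_lt_of_neg one_lt_two (by linarith)
  have hA0 : 0 ≤ A := by simpa using hA 1 one_pos ∅ (by simp)
  set Γ' := Γ.filter (0 < t ·)
  have hlevel : ∀ μ ∈ Γ', ∃ k : ℕ,
      t μ ∈ Set.Icc (ε / 2 ^ (k + 1)) (2 * (ε / 2 ^ (k + 1))) := fun μ hμ =>
    have hμ := Finset.mem_filter.1 hμ
    exists_mem_Icc_div_two_pow hμ.2 (hΓ μ hμ.1).2
  choose! k hk using hlevel
  have hclass : ∀ j : ℕ, ∑ μ ∈ Γ' with k μ = j, t μ ^ 2 ≤ 4 * A * ε ^ (2 - p) * r ^ (j + 1) := by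
    intro j
    have hδ : 0 < ε / 2 ^ (j + 1) := by positivity
    have hmem : ∀ μ ∈ Γ'.filter (k · = j),
        t μ ∈ Set.Icc (ε / 2 ^ (j + 1)) (2 * (ε / 2 ^ (j + 1))) := by
      intro μ hμ
      obtain ⟨hμ', rfl⟩ := Finset.mem_filter.1 hμ
      exact hk μ hμ'
    refine (sum_sq_le_of_mem_Icc t hδ _ hmem (hA _ hδ _ fun μ hμ => (hmem μ hμ).1)).trans_eq ?_
    have hr' : r = (2 ^ (2 - p))⁻¹ := by rw [hr, ← Real.rpow_neg zero_le_two, neg_sub]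
    rw [Real.div_rpow hε.le (by positivity), ← Real.rpow_pow_comm zero_le_two, hr', inv_pow,
      div_eq_mul_inv]
    ring
  calc ∑ μ ∈ Γ, t μ ^ 2 = ∑ μ ∈ Γ', t μ ^ 2 :=
        (Finset.sum_filter_of_ne fun μ hμ h => (hΓ μ hμ).1.lt_of_ne' (by simpa using h)).symm
    _ = ∑ j ∈ Γ'.image k, ∑ μ ∈ Γ' with k μ = j, t μ ^ 2 :=
        (Finset.sum_fiberwise_of_maps_to (fun μ hμ => Finset.mem_image_of_mem k hμ) _).symm
    _ ≤ ∑ j ∈ Γ'.image k, 4 * A * ε ^ (2 - p) * r ^ (j + 1) := Finset.sum_le_sum fun j _ => hclass j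
    _ = 4 * A * ε ^ (2 - p) * ∑ j ∈ Γ'.image k, r ^ (j + 1) := (Finset.mul_sum ..).symm
    _ ≤ 4 * A * ε ^ (2 - p) * (r / (1 - r)) := by
        gcongr
        exact sum_pow_succ_le_div_one_sub hr0 hr1 _
    _ = dyadicTailConst p * A * ε ^ (2 - p) := by rw [dyadicTailConst]; ring

end TailSum

section Forest

variable {S : Type*} (parent : S → Option S)

def descendants (lam : S) : Set S :=
  {x | Relation.ReflTransGen (fun a b : S => parent a = some b) x lam}

def outerBoundary (T : Set S) : Set S :=
  {μ | μ ∉ T ∧ ∃ π ∈ T, parent μ = some π}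

theorem tcal_sq (v : S → ℝ) (lam : S) :
    tcal parent v lam ^ 2 = ∑' x : descendants parent lam, v x ^ 2 :=
  Real.sq_sqrt (tsum_nonneg fun _ => sq_nonneg _)

theorem tcal_le_tcal_of_parent_eq_some {v : S → ℝ} (hv : Summable (v · ^ 2)) {δ δ' : S}
    (h : parent δ = some δ') : tcal parent v δ ≤ tcal parent v δ' := by
  have hsub : descendants parent δ ⊆ descendants parent δ' := fun _ hx => hx.tail h
  exact Real.sqrt_le_sqrt <| (hv.subtype _).tsum_le_tsum_of_inj (Set.inclusion hsub)
    (Set.inclusion_injective hsub) (fun _ _ => sq_nonneg _) (fun _ => le_rfl) (hv.subtype _)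

theorem isTree_setOf_le_union_roots (f : S → ℝ)
    (hf : ∀ δ δ', parent δ = some δ' → f δ ≤ f δ') (ε : ℝ) :
    IsTree parent ({x | ε ≤ f x} ∪ {x | parent x = none}) := by
  refine ⟨fun δ hδ => Or.inr hδ, ?_⟩
  rintro δ (hδ | hδ) δ' h
  · exact Or.inl (le_trans hδ (hf δ δ' h))
  · simp [show parent δ = none from hδ] at h

theorem outerBoundary_finite (hchildren : ∀ δ : S, {δ' : S | parent δ' = some δ}.Finite)
    {T : Set S} (hT : T.Finite) : (outerBoundary parent T).Finite :=
  (hT.biUnion fun π _ => hchildren π).subset fun _ ⟨_, _, hπ, h⟩ => Set.mem_biUnion hπ h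

theorem exists_mem_outerBoundary_of_notMem (hwf : WellFounded fun b a : S => parent a = some b)
    {T : Set S} (hroots : ∀ δ, parent δ = none → δ ∈ T) (lam : S) (hlam : lam ∉ T) :
    ∃ μ ∈ outerBoundary parent T, lam ∈ descendants parent μ := by
  induction lam using hwf.induction with
  | _ lam ih =>
    cases hpar : parent lam with
    | none => exact absurd (hroots lam hpar) hlam
    | some π =>
      by_cases hπ : π ∈ T
      · exact ⟨lam, ⟨hlam, π, hπ, hpar⟩, .refl⟩
      · obtain ⟨μ, hμ, hdesc⟩ := ih π hpar hπ
        exact ⟨μ, hμ, .head hpar hdesc⟩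

theorem tsum_compl_sq_le_sum_tcal_sq {v : S → ℝ} (hv : Summable (v · ^ 2)) {T : Set S}
    {Γ : Finset S} (hcover : ∀ lam ∉ T, ∃ μ ∈ Γ, lam ∈ descendants parent μ) :
    ∑' i : {i // i ∉ T}, v i ^ 2 ≤ ∑ μ ∈ Γ, tcal parent v μ ^ 2 := by
  rw [← ENNReal.ofReal_le_ofReal_iff (by positivity),
    ENNReal.ofReal_tsum_of_nonneg (fun _ => sq_nonneg _) (hv.subtype _),
    ENNReal.ofReal_sum_of_nonneg (fun _ _ => sq_nonneg _)]
  calc ∑' i : {i // i ∉ T}, ENNReal.ofReal (v i ^ 2)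
      ≤ ∑' i : ⋃ μ ∈ Γ, descendants parent μ, ENNReal.ofReal (v i ^ 2) :=
        ENNReal.tsum_mono_subtype (fun i => ENNReal.ofReal (v i ^ 2)) fun lam hlam => by
          obtain ⟨μ, hμ, hdesc⟩ := hcover lam hlam
          exact Set.mem_biUnion hμ hdesc
    _ ≤ ∑ μ ∈ Γ, ∑' i : descendants parent μ, ENNReal.ofReal (v i ^ 2) :=
        ENNReal.tsum_biUnion_le (fun i => ENNReal.ofReal (v i ^ 2)) Γ (descendants parent)
    _ = ∑ μ ∈ Γ, ENNReal.ofReal (tcal parent v μ ^ 2) := by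
        refine Finset.sum_congr rfl fun μ _ => ?_
        rw [tcal_sq, ENNReal.ofReal_tsum_of_nonneg (fun _ => sq_nonneg _) (hv.subtype _)]

end Forest

section TreeApproximation

variable {S : Type*} {parent : S → Option S}

theorem summable_sq_of_lp (v : lp (fun _ : S => ℝ) 2) : Summable fun i => v i ^ 2 := by
  simpa [Real.rpow_two] using (lp.memℓp v).summable (p := 2) (by norm_num)

theorem norm_sub_sum_single_sq [DecidableEq S] (v : lp (fun _ : S => ℝ) 2) (T : Finset S) :
    ‖v - ∑ i ∈ T, lp.single 2 i (v i)‖ ^ 2 = ∑' i : {i // i ∉ T}, v i ^ 2 := by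
  have h := lp.norm_compl_sum_single (p := 2) (by norm_num) v T
  have hv := lp.norm_rpow_eq_tsum (p := 2) (by norm_num) v
  simp only [ENNReal.toReal_ofNat, Real.rpow_two, Real.norm_eq_abs, sq_abs] at h hv
  rw [h, hv, ← (summable_sq_of_lp v).sum_add_tsum_subtype_compl T]
  ring

theorem treeSigma_le_norm_sub {N : ℕ} {v w : lp (fun _ : S => ℝ) 2} (T : Finset S)
    (hT : IsTree parent T) (hcard : T.card ≤ N) (hw : ∀ lam ∉ T, w lam = 0) :
    treeSigma parent N v ≤ ‖v - w‖ :=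
  csInf_le ⟨0, by rintro _ ⟨_, _, _, _, _, rfl⟩; exact norm_nonneg _⟩ ⟨T, w, hT, hcard, hw, rfl⟩

-- Every tree contains all roots, so for such `N` no tree is admissible and `sInf ∅ = 0`.
theorem treeSigma_eq_zero_of_lt_card_roots (hroots : {δ | parent δ = none}.Finite) {N : ℕ}
    (hN : N < hroots.toFinset.card) (v : lp (fun _ : S => ℝ) 2) : treeSigma parent N v = 0 := by
  refine (congrArg sInf (Set.eq_empty_of_forall_notMem ?_)).trans Real.sInf_empty
  rintro _ ⟨T, w, hT, hcard, -, -⟩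
  have := Finset.card_le_card (s := hroots.toFinset) (t := T) fun δ hδ =>
    hT.1 δ (hroots.mem_toFinset.1 hδ)
  omega

theorem treeSigma_le_sqrt_sum_tcal_sq (hwf : WellFounded fun b a : S => parent a = some b)
    {N : ℕ} (v : lp (fun _ : S => ℝ) 2) {T : Finset S} (hT : IsTree parent T)
    (hcard : T.card ≤ N) {Γ : Finset S} (hΓ : outerBoundary parent T ⊆ Γ) :
    treeSigma parent N v ≤ √(∑ μ ∈ Γ, tcal parent (fun i => v i) μ ^ 2) := by
  classical
  have hw : ∀ lam ∉ T, (∑ i ∈ T, lp.single 2 i (v i)) lam = 0 := fun lam hlam => by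
    rw [lp.coeFn_sum, Finset.sum_apply]
    refine Finset.sum_eq_zero fun i hi => ?_
    rw [lp.single_apply, Pi.single_eq_of_ne]
    rintro rfl
    exact hlam hi
  refine (treeSigma_le_norm_sub T hT hcard hw).trans ((abs_norm _).ge.trans (Real.abs_le_sqrt ?_))
  rw [norm_sub_sum_single_sq]
  exact tsum_compl_sq_le_sum_tcal_sq parent (summable_sq_of_lp v) fun lam hlam =>
    let ⟨μ, hμ, hdesc⟩ := exists_mem_outerBoundary_of_notMem parent hwf hT.1 lam hlam
    ⟨μ, hΓ hμ, hdesc⟩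

end TreeApproximation

theorem rpow_mul_mul_rpow_one_div_rpow_two_sub {M X p : ℝ} (hM : 0 ≤ M) (hX : 0 ≤ X)
    (hp : p ≠ 0) : M ^ p * (M * X ^ (1 / p)) ^ (2 - p) = (M * X ^ (1 / p - 1 / 2)) ^ 2 := by
  have hMsq : M ^ p * M ^ (2 - p) = M ^ 2 := by
    rw [← Real.rpow_add' hM (by norm_num), add_sub_cancel, Real.rpow_two]
  have hXsq : (X ^ (1 / p)) ^ (2 - p) = (X ^ (1 / p - 1 / 2)) ^ 2 := by
    rw [← Real.rpow_mul hX, ← Real.rpow_two, ← Real.rpow_mul hX]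
    congr 1
    field_simp
  rw [Real.mul_rpow hM (by positivity), hXsq, ← mul_assoc, hMsq, mul_pow]

section Rate

variable {S : Type*} {parent : S → Option S}

theorem treeSigma_le_of_card_levelSet_le {p A ε : ℝ} (hp : p < 2) (hε : 0 < ε)
    (hwf : WellFounded fun b a : S => parent a = some b)
    (hroots : {δ | parent δ = none}.Finite)
    (hchildren : ∀ δ : S, {δ' : S | parent δ' = some δ}.Finite) (v : lp (fun _ : S => ℝ) 2)
    (hA : ∀ δ > 0, ∀ s : Finset S, (∀ μ ∈ s, δ ≤ tcal parent (fun i => v i) μ) →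
      s.card * δ ^ p ≤ A)
    (hlev : {x | ε ≤ tcal parent (fun i => v i) x}.Finite) {N : ℕ}
    (hN : hlev.toFinset.card + hroots.toFinset.card ≤ N) :
    treeSigma parent N v ≤ √(dyadicTailConst p * A * ε ^ (2 - p)) := by
  classical
  set T := hlev.toFinset ∪ hroots.toFinset
  have hTcoe : (T : Set S) = {x | ε ≤ tcal parent (fun i => v i) x} ∪ {x | parent x = none} := by
    simp [T]
  have hT : IsTree parent T := hTcoe ▸ isTree_setOf_le_union_roots parent _
    (fun _ _ h => tcal_le_tcal_of_parent_eq_some parent (summable_sq_of_lp v) h) ε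
  have hΓ := outerBoundary_finite parent hchildren T.finite_toSet
  refine (treeSigma_le_sqrt_sum_tcal_sq hwf v hT ((Finset.card_union_le _ _).trans hN)
    hΓ.coe_toFinset.ge).trans (Real.sqrt_le_sqrt ?_)
  refine sum_sq_le_of_card_mul_rpow_le _ hp hε _ (fun μ hμ => ⟨Real.sqrt_nonneg _, ?_⟩) hA
  have hμT := (hΓ.mem_toFinset.1 hμ).1
  rw [hTcoe] at hμT
  exact (not_le.1 fun h => hμT (Or.inl h)).le

theorem treeSigma_add_card_roots_le {p : ℝ} (hp0 : 0 < p) (hp2 : p < 2)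
    (hwf : WellFounded fun b a : S => parent a = some b)
    (hroots : {δ | parent δ = none}.Finite)
    (hchildren : ∀ δ : S, {δ' : S | parent δ' = some δ}.Finite) (v : lp (fun _ : S => ℝ) 2)
    (hw : wlp p (tcal parent fun i => v i) ≠ ⊤) (m : ℕ) :
    treeSigma parent (m + hroots.toFinset.card) v ≤ √(dyadicTailConst p) *
      ((wlp p (tcal parent fun i => v i)).toReal * (2 / (m + 1)) ^ (1 / p - 1 / 2)) := by
  set M := (wlp p (tcal parent fun i => v i)).toReal
  set X : ℝ := 2 / (m + 1)
  have hX : 0 < X := by positivity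
  have hA : ∀ δ > 0, ∀ s : Finset S, (∀ μ ∈ s, δ ≤ tcal parent (fun i => v i) μ) →
      s.card * δ ^ p ≤ M ^ p := fun δ hδ s hs =>
    card_mul_rpow_le_wlp_toReal_rpow _ hp0 hw hδ.le s fun μ hμ => (hs μ hμ).trans (le_abs_self _)
  have hlev {ε : ℝ} (hε : 0 < ε) : {x | ε ≤ tcal parent (fun i => v i) x}.Finite :=
    (finite_setOf_le_abs_of_wlp_ne_top _ hp0 hw hε).subset fun x (hx : ε ≤ _) =>
      show ε ≤ |_| from hx.trans (le_abs_self _)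
  have hM0 : 0 ≤ M := ENNReal.toReal_nonneg
  rcases hM0.eq_or_lt with hM | hM
  · have hcard : (hlev one_pos).toFinset.card = 0 := by
      have := hA 1 one_pos _ fun μ hμ => (hlev one_pos).mem_toFinset.1 hμ
      rw [← hM, Real.zero_rpow hp0.ne', Real.one_rpow, mul_one] at this
      exact_mod_cast this.antisymm (Nat.cast_nonneg _)
    refine (treeSigma_le_of_card_levelSet_le hp2 one_pos hwf hroots hchildren v hA (hlev one_pos)
      (by omega)).trans_eq ?_
    rw [← hM, Real.zero_rpow hp0.ne']
    simp
  · set ε := M * X ^ (1 / p)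
    have hε : 0 < ε := by positivity
    have hεp : ε ^ p = M ^ p * X := by
      rw [Real.mul_rpow hM.le (by positivity), ← Real.rpow_mul hX.le, one_div_mul_cancel hp0.ne',
        Real.rpow_one]
    have hcard : (hlev hε).toFinset.card ≤ m := by
      have h := hA ε hε _ fun μ hμ => (hlev hε).mem_toFinset.1 hμ
      rw [hεp, ← mul_assoc, mul_right_comm, mul_le_iff_le_one_left (by positivity),
        ← le_div_iff₀ hX, one_div_div] at h
      have : ((hlev hε).toFinset.card : ℝ) < m + 1 := by linarith
      have : (hlev hε).toFinset.card < m + 1 := by exact_mod_cast this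
      omega
    refine (treeSigma_le_of_card_levelSet_le hp2 hε hwf hroots hchildren v hA (hlev hε)
      (by omega)).trans_eq ?_
    rw [mul_assoc, rpow_mul_mul_rpow_one_div_rpow_two_sub hM0 hX.le hp0.ne',
      Real.sqrt_mul (dyadicTailConst_pos hp2).le, Real.sqrt_sq (by positivity)]

theorem rpow_mul_treeSigma_le {p : ℝ} (hp0 : 0 < p) (hp2 : p < 2)
    (hwf : WellFounded fun b a : S => parent a = some b)
    (hroots : {δ | parent δ = none}.Finite)
    (hchildren : ∀ δ : S, {δ' : S | parent δ' = some δ}.Finite) (v : lp (fun _ : S => ℝ) 2)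
    (hw : wlp p (tcal parent fun i => v i) ≠ ⊤) (N : ℕ) :
    ((N : ℝ) + 1) ^ (1 / p - 1 / 2) * treeSigma parent N v ≤
      √(dyadicTailConst p) * (2 * (hroots.toFinset.card + 1)) ^ (1 / p - 1 / 2) *
        (wlp p (tcal parent fun i => v i)).toReal := by
  set nR := hroots.toFinset.card
  set M := (wlp p (tcal parent fun i => v i)).toReal
  have hs : 0 < 1 / p - 1 / 2 := by
    rw [sub_pos]
    exact one_div_lt_one_div_of_lt hp0 hp2
  rcases lt_or_ge N nR with hN | hN
  · rw [treeSigma_eq_zero_of_lt_card_roots hroots hN, mul_zero]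
    positivity
  obtain ⟨m, rfl⟩ := Nat.exists_eq_add_of_le' hN
  calc ((↑(m + nR) : ℝ) + 1) ^ (1 / p - 1 / 2) * treeSigma parent (m + nR) v
      ≤ ((↑(m + nR) : ℝ) + 1) ^ (1 / p - 1 / 2) *
          (√(dyadicTailConst p) * (M * (2 / (m + 1)) ^ (1 / p - 1 / 2))) := by
        gcongr
        exact treeSigma_add_card_roots_le hp0 hp2 hwf hroots hchildren v hw m
    _ = √(dyadicTailConst p) * (2 / (m + 1) * (m + nR + 1)) ^ (1 / p - 1 / 2) * M := by
        rw [Real.mul_rpow (by positivity) (by positivity)]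
        push_cast
        ring
    _ ≤ √(dyadicTailConst p) * (2 * (nR + 1)) ^ (1 / p - 1 / 2) * M := by
        gcongr √(dyadicTailConst p) * ?_ ^ _ * M
        rw [div_mul_eq_mul_div, div_le_iff₀ (by positivity)]
        nlinarith [(m.cast_nonneg : (0 : ℝ) ≤ m), (nR.cast_nonneg : (0 : ℝ) ≤ nR)]

end Rate

/-- Proposition 4.2 of the paper (after [CDD03, Prop. 2.2]): if `p ∈ (0,2)` and
`‖t(v)‖_{ℓw_p} < ∞`, then `v` belongs to the tree approximation class `A^s_t` with
`s = 1/p − 1/2`, i.e. `sup_N (N+1)^s·σ^tree_N(v)` is finite, and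
`‖v‖_{A^s_t} ≤ C‖t(v)‖_{ℓw_p}`, with `C > 0` depending only on `p`, the number of
roots, and an upper bound on the number of children per node. -/
theorem stmt_6 (p : ℝ) (hp0 : 0 < p) (hp2 : p < 2) (nR K : ℕ) :
    ∃ C : ℝ, 0 < C ∧
      ∀ (S : Type) (_ : Countable S) (parent : S → Option S),
        (WellFounded fun b a : S => parent a = some b) →
        ∀ hrfin : {δ : S | parent δ = none}.Finite,
          hrfin.toFinset.card = nR →
          {δ : S | parent δ = none}.Nonempty →
          (∀ δ : S, {δ' : S | parent δ' = some δ}.Finite) →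
          (∀ δ : S, {δ' : S | parent δ' = some δ}.ncard ≤ K) →
          ∀ v : lp (fun _ : S => ℝ) 2,
            wlp p (tcal parent fun i => v i) ≠ ⊤ →
            BddAbove (Set.range fun N : ℕ =>
              ((N : ℝ) + 1) ^ (1 / p - 1 / 2) * treeSigma parent N v) ∧
            (⨆ N : ℕ, ((N : ℝ) + 1) ^ (1 / p - 1 / 2) * treeSigma parent N v) ≤
              C * (wlp p (tcal parent fun i => v i)).toReal := by
  refine ⟨√(dyadicTailConst p) * (2 * (nR + 1)) ^ (1 / p - 1 / 2),
    mul_pos (Real.sqrt_pos.2 (dyadicTailConst_pos hp2)) (by positivity), ?_⟩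
  intro S _ parent hwf hroots hnR _ hchildren _ v hw
  subst hnR
  have key := rpow_mul_treeSigma_le hp0 hp2 hwf hroots hchildren v hw
  exact ⟨⟨_, Set.forall_mem_range.2 key⟩, ciSup_le key⟩
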